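/- Let ρ₁, ρ₂, τ₁, τ₂ be Hermitian 2×2 matrices with tr(ρ_k) = tr(τ_k) for k = 1,2. Then the inequality ‖(1/2)I + βτ₁ + γτ₂‖₁ ≤ ‖(1/2)I + βρ₁ + γρ₂‖₁ holds for all real β, γ if and only if for every real t the matrix τ₁ − tτ₂ is majorized by ρ₁ − tρ₂. -/

import Mathlib

open Matrix ComplexOrder

/-- The trace norm of a 2×2 complex matrix: `tr √(AᴴA)`. -/
noncomputable def traceNorm (A : Matrix (Fin 2) (Fin 2) ℂ) : ℝ :=
  (((Matrix.isHermitian_conjTranspose_mul_self A).eigenvectorUnitary : Matrix (Fin 2) (Fin 2) ℂ) *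
    diagonal (((↑) : ℝ → ℂ) ∘ (√·) ∘ (Matrix.isHermitian_conjTranspose_mul_self A).eigenvalues) *
    (star (Matrix.isHermitian_conjTranspose_mul_self A).eigenvectorUnitary :
      Matrix (Fin 2) (Fin 2) ℂ)).trace.re

/-- `B ≺ A` for Hermitian 2×2 matrices: the largest eigenvalue of `B` is at most that of `A`
and the eigenvalue sums agree. -/
noncomputable def Maj2 {A B : Matrix (Fin 2) (Fin 2) ℂ}
    (hA : A.IsHermitian) (hB : B.IsHermitian) : Prop :=
  max (hB.eigenvalues 0) (hB.eigenvalues 1) ≤ max (hA.eigenvalues 0) (hA.eigenvalues 1) ∧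
    hB.eigenvalues 0 + hB.eigenvalues 1 = hA.eigenvalues 0 + hA.eigenvalues 1

namespace TNAux

/-- The "spread" functional: for a Hermitian matrix this equals the absolute difference of
the two eigenvalues. -/
noncomputable def D (M : Matrix (Fin 2) (Fin 2) ℂ) : ℝ :=
  Real.sqrt (((M 0 0).re - (M 1 1).re) ^ 2 + 4 * Complex.normSq (M 0 1))

lemma D_nonneg (M : Matrix (Fin 2) (Fin 2) ℂ) : 0 ≤ D M := Real.sqrt_nonneg _

lemma sqrt_aux_eq_abs (x u : ℝ) : Real.sqrt (x ^ 2 + u ^ 2) = ‖(⟨x, u⟩ : ℂ)‖ := by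
  rw [Complex.norm_def, Complex.normSq_mk]
  ring_nf

lemma sqrt_aux_triangle (x₁ x₂ : ℝ) (b₁ b₂ : ℂ) :
    Real.sqrt ((x₁ + x₂) ^ 2 + 4 * Complex.normSq (b₁ + b₂)) ≤
      Real.sqrt (x₁ ^ 2 + 4 * Complex.normSq b₁) + Real.sqrt (x₂ ^ 2 + 4 * Complex.normSq b₂) := by
  have hb1 : Complex.normSq b₁ = ‖b₁‖ ^ 2 := (Complex.sq_norm b₁).symm
  have hb2 : Complex.normSq b₂ = ‖b₂‖ ^ 2 := (Complex.sq_norm b₂).symm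
  have step1 : Real.sqrt ((x₁ + x₂) ^ 2 + 4 * Complex.normSq (b₁ + b₂)) ≤
      Real.sqrt ((x₁ + x₂) ^ 2 + (2 * ‖b₁‖ + 2 * ‖b₂‖) ^ 2) := by
    apply Real.sqrt_le_sqrt
    have habs : ‖b₁ + b₂‖ ≤ ‖b₁‖ + ‖b₂‖ := norm_add_le _ _
    have h0 : (0 : ℝ) ≤ ‖b₁ + b₂‖ := norm_nonneg _
    have h1 : (0 : ℝ) ≤ ‖b₁‖ := norm_nonneg _
    have h2 : (0 : ℝ) ≤ ‖b₂‖ := norm_nonneg _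
    have hsq : Complex.normSq (b₁ + b₂) = ‖b₁ + b₂‖ ^ 2 := (Complex.sq_norm _).symm
    nlinarith [habs, h0, h1, h2, hsq]
  have hmk : (⟨x₁, 2 * ‖b₁‖⟩ + ⟨x₂, 2 * ‖b₂‖⟩ : ℂ)
      = (⟨x₁ + x₂, 2 * ‖b₁‖ + 2 * ‖b₂‖⟩ : ℂ) := by
    apply Complex.ext <;> simp
  have step2 : Real.sqrt ((x₁ + x₂) ^ 2 + (2 * ‖b₁‖ + 2 * ‖b₂‖) ^ 2) ≤
      Real.sqrt (x₁ ^ 2 + 4 * Complex.normSq b₁) + Real.sqrt (x₂ ^ 2 + 4 * Complex.normSq b₂) := by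
    rw [sqrt_aux_eq_abs, ← hmk]
    have h1 : x₁ ^ 2 + 4 * Complex.normSq b₁ = x₁ ^ 2 + (2 * ‖b₁‖) ^ 2 := by
      rw [hb1]; ring
    have h2 : x₂ ^ 2 + 4 * Complex.normSq b₂ = x₂ ^ 2 + (2 * ‖b₂‖) ^ 2 := by
      rw [hb2]; ring
    rw [h1, h2, sqrt_aux_eq_abs, sqrt_aux_eq_abs]
    exact norm_add_le _ _
  exact step1.trans step2

lemma D_add_le (M N : Matrix (Fin 2) (Fin 2) ℂ) : D (M + N) ≤ D M + D N := by
  unfold D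
  have e1 : ((M + N) 0 0).re = (M 0 0).re + (N 0 0).re := by simp [Matrix.add_apply]
  have e2 : ((M + N) 1 1).re = (M 1 1).re + (N 1 1).re := by simp [Matrix.add_apply]
  have e3 : (M + N) 0 1 = M 0 1 + N 0 1 := by simp [Matrix.add_apply]
  rw [e1, e2, e3]
  have h := sqrt_aux_triangle ((M 0 0).re - (M 1 1).re) ((N 0 0).re - (N 1 1).re) (M 0 1) (N 0 1)
  have harg : (M 0 0).re + (N 0 0).re - ((M 1 1).re + (N 1 1).re)
      = ((M 0 0).re - (M 1 1).re) + ((N 0 0).re - (N 1 1).re) := by ring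
  rw [harg]
  exact h

lemma D_smul (s : ℝ) (M : Matrix (Fin 2) (Fin 2) ℂ) : D ((s : ℂ) • M) = |s| * D M := by
  unfold D
  have e1 : (((s : ℂ) • M) 0 0).re = s * (M 0 0).re := by
    simp [Matrix.smul_apply, Complex.re_ofReal_mul, smul_eq_mul]
  have e2 : (((s : ℂ) • M) 1 1).re = s * (M 1 1).re := by
    simp [Matrix.smul_apply, Complex.re_ofReal_mul, smul_eq_mul]
  have e3 : ((s : ℂ) • M) 0 1 = (s : ℂ) * M 0 1 := by simp [Matrix.smul_apply, smul_eq_mul]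
  rw [e1, e2, e3, Complex.normSq_mul, Complex.normSq_ofReal]
  have harg : (s * (M 0 0).re - s * (M 1 1).re) ^ 2 + 4 * (s * s * Complex.normSq (M 0 1))
      = s ^ 2 * (((M 0 0).re - (M 1 1).re) ^ 2 + 4 * Complex.normSq (M 0 1)) := by ring
  rw [harg, Real.sqrt_mul (sq_nonneg s), Real.sqrt_sq_eq_abs]

lemma D_neg (M : Matrix (Fin 2) (Fin 2) ℂ) : D (-M) = D M := by
  have h := D_smul (-1) M
  have : ((-1 : ℝ) : ℂ) • M = -M := by
    push_cast
    exact neg_one_smul ℂ M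
  rw [this] at h
  simpa using h

lemma D_sub_le (M N : Matrix (Fin 2) (Fin 2) ℂ) : D (M - N) ≤ D M + D N := by
  rw [sub_eq_add_neg]
  calc D (M + -N) ≤ D M + D (-N) := D_add_le _ _
    _ = D M + D N := by rw [D_neg]

lemma D_shift (M : Matrix (Fin 2) (Fin 2) ℂ) : D ((1 / 2 : ℂ) • 1 + M) = D M := by
  unfold D
  have h0 : ((1 / 2 : ℂ) • (1 : Matrix (Fin 2) (Fin 2) ℂ) + M) 0 0 = 1 / 2 + M 0 0 := by
    simp [Matrix.add_apply, Matrix.smul_apply, Matrix.one_apply]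
  have h1 : ((1 / 2 : ℂ) • (1 : Matrix (Fin 2) (Fin 2) ℂ) + M) 1 1 = 1 / 2 + M 1 1 := by
    simp [Matrix.add_apply, Matrix.smul_apply, Matrix.one_apply]
  have h01 : ((1 / 2 : ℂ) • (1 : Matrix (Fin 2) (Fin 2) ℂ) + M) 0 1 = M 0 1 := by
    simp [Matrix.add_apply, Matrix.smul_apply, Matrix.one_apply]
  rw [h0, h1, h01]
  congr 2
  simp [Complex.add_re]

/-- Sum of eigenvalues is the trace. -/
lemma herm_trace {A : Matrix (Fin 2) (Fin 2) ℂ} (hA : A.IsHermitian) :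
    A.trace = ((hA.eigenvalues 0 + hA.eigenvalues 1 : ℝ) : ℂ) := by
  conv_lhs => rw [hA.spectral_theorem, Unitary.conjStarAlgAut_apply]
  rw [Matrix.trace_mul_cycle, Unitary.coe_star_mul_self, one_mul, Matrix.trace_diagonal]
  simp [Fin.sum_univ_two]

lemma herm_trace_re {A : Matrix (Fin 2) (Fin 2) ℂ} (hA : A.IsHermitian) :
    A.trace.re = hA.eigenvalues 0 + hA.eigenvalues 1 := by
  rw [herm_trace hA, Complex.ofReal_re]

/-- Product of eigenvalues is the determinant. -/
lemma herm_det_re {A : Matrix (Fin 2) (Fin 2) ℂ} (hA : A.IsHermitian) :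
    A.det.re = hA.eigenvalues 0 * hA.eigenvalues 1 := by
  rw [hA.det_eq_prod_eigenvalues]
  simp [Fin.prod_univ_two, ← Complex.ofReal_mul]

lemma herm_D {A : Matrix (Fin 2) (Fin 2) ℂ} (hA : A.IsHermitian) :
    D A = |hA.eigenvalues 0 - hA.eigenvalues 1| := by
  have h00 : (A 0 0).im = 0 := by
    have := hA.coe_re_apply_self 0
    have h := congrArg Complex.im this
    simpa using h.symm
  have h11 : (A 1 1).im = 0 := by
    have := hA.coe_re_apply_self 1
    have h := congrArg Complex.im this
    simpa using h.symm
  have h10 : A 1 0 = starRingEnd ℂ (A 0 1) := by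
    have := hA.apply 1 0
    rw [← this]
    simp [Complex.star_def]
  have htr : A.trace = A 0 0 + A 1 1 := Matrix.trace_fin_two A
  have hdet : A.det = A 0 0 * A 1 1 - A 0 1 * A 1 0 := Matrix.det_fin_two A
  have hdet_re : A.det.re = (A 0 0).re * (A 1 1).re - Complex.normSq (A 0 1) := by
    rw [hdet, h10]
    rw [Complex.mul_conj]
    simp [Complex.mul_re, h00, h11]
  have htr_re : A.trace.re = (A 0 0).re + (A 1 1).re := by
    rw [htr]; simp
  have key : ((A 0 0).re - (A 1 1).re) ^ 2 + 4 * Complex.normSq (A 0 1)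
      = (hA.eigenvalues 0 - hA.eigenvalues 1) ^ 2 := by
    have h1 := herm_trace_re hA
    have h2 := herm_det_re hA
    rw [htr_re] at h1
    rw [hdet_re] at h2
    linear_combination (((A 0 0).re + (A 1 1).re) + (hA.eigenvalues 0 + hA.eigenvalues 1)) * h1 - 4 * h2
  rw [D, key, Real.sqrt_sq_eq_abs]

/-- `|x| + |y| = max |x + y| |x - y|`. -/
lemma abs_add_abs_eq_max (x y : ℝ) : |x| + |y| = max |x + y| |x - y| := by
  rcases abs_cases x with ⟨hx, hx'⟩ | ⟨hx, hx'⟩ <;>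
    rcases abs_cases y with ⟨hy, hy'⟩ | ⟨hy, hy'⟩ <;>
    rcases abs_cases (x + y) with ⟨h1, h1'⟩ | ⟨h1, h1'⟩ <;>
    rcases abs_cases (x - y) with ⟨h2, h2'⟩ | ⟨h2, h2'⟩ <;>
    rw [hx, hy, h1, h2, max_def] <;> split_ifs <;> linarith

lemma max_formula (a b : ℝ) : max a b = (a + b + |a - b|) / 2 := by
  rcases le_total a b with h | h
  · rw [max_eq_right h, abs_of_nonpos (by linarith)]; ring
  · rw [max_eq_left h, abs_of_nonneg (by linarith)]; ring

/-- Trace norm of a Hermitian 2×2 matrix is the sum of the absolute values of eigenvalues. -/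
lemma traceNorm_herm_eigen {A : Matrix (Fin 2) (Fin 2) ℂ} (hA : A.IsHermitian) :
    traceNorm A = |hA.eigenvalues 0| + |hA.eigenvalues 1| := by
  set U : Matrix (Fin 2) (Fin 2) ℂ := (hA.eigenvectorUnitary : Matrix (Fin 2) (Fin 2) ℂ) with hU
  set e : Fin 2 → ℝ := hA.eigenvalues with he
  set S : Matrix (Fin 2) (Fin 2) ℂ := U * diagonal (fun i => (Complex.ofReal |e i|)) * star U with hS
  have hUstar : star U * U = 1 := Unitary.coe_star_mul_self _
  have hSpsd : S.PosSemidef := by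
    have hd : (diagonal (fun i => (Complex.ofReal |e i|))).PosSemidef := by
      rw [Matrix.posSemidef_diagonal_iff]
      intro i
      rw [Complex.zero_le_real]
      exact abs_nonneg _
    have := hd.mul_mul_conjTranspose_same U
    rwa [← Matrix.star_eq_conjTranspose] at this
  have hsq : S ^ 2 = Aᴴ * A := by
    have hAe : A = U * diagonal (RCLike.ofReal ∘ e) * star U := by
      conv_lhs => rw [hA.spectral_theorem, Unitary.conjStarAlgAut_apply]
    rw [hA.eq]
    rw [pow_two, hS]
    calc (U * diagonal (fun i => (Complex.ofReal |e i|)) * star U) *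
          (U * diagonal (fun i => (Complex.ofReal |e i|)) * star U)
        = U * (diagonal (fun i => (Complex.ofReal |e i|)) * ((star U * U) *
            diagonal (fun i => (Complex.ofReal |e i|)))) * star U := by
          simp only [Matrix.mul_assoc]
      _ = U * (diagonal (fun i => (Complex.ofReal |e i|)) * diagonal (fun i => (Complex.ofReal |e i|))) * star U := by
          rw [hUstar, one_mul]
      _ = U * diagonal (fun i => ((e i : ℂ) * (e i : ℂ))) * star U := by
          rw [Matrix.diagonal_mul_diagonal]
          have hdd : (fun i => (Complex.ofReal |e i|) * (Complex.ofReal |e i|))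
              = fun i => ((e i : ℂ) * (e i : ℂ)) := by
            funext i
            rw [← Complex.ofReal_mul, ← Complex.ofReal_mul, abs_mul_abs_self]
          rw [hdd]
      _ = A * A := by
          conv_rhs => rw [hAe]
          calc U * diagonal (fun i => ((e i : ℂ) * (e i : ℂ))) * star U
              = U * (diagonal (RCLike.ofReal ∘ e) * ((star U * U) *
                  diagonal (RCLike.ofReal ∘ e))) * star U := by
                rw [hUstar, one_mul, Matrix.diagonal_mul_diagonal]
                rfl
            _ = (U * diagonal (RCLike.ofReal ∘ e) * star U) *
                  (U * diagonal (RCLike.ofReal ∘ e) * star U) := by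
                simp only [Matrix.mul_assoc]
  have hSsqrt : (Matrix.isHermitian_conjTranspose_mul_self A).cfc Real.sqrt = S := by
    rw [← Matrix.IsHermitian.cfc_eq, hA.eq, ← pow_two,
      ← cfc_comp_pow Real.sqrt 2 A (ha := hA.isSelfAdjoint), Matrix.IsHermitian.cfc_eq hA]
    have habs : (fun x : ℝ => √(x ^ 2)) = abs := funext fun x => Real.sqrt_sq_eq_abs x
    rw [habs]
    rfl
  have htr : S.trace = ((|e 0| + |e 1| : ℝ) : ℂ) := by
    rw [hS, Matrix.trace_mul_cycle, hUstar, one_mul, Matrix.trace_diagonal]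
    simp [Fin.sum_univ_two]
  have htn : traceNorm A = ((Matrix.isHermitian_conjTranspose_mul_self A).cfc Real.sqrt).trace.re :=
    rfl
  rw [htn, hSsqrt, htr, Complex.ofReal_re]

/-- Trace norm of a Hermitian matrix via trace and spread. -/
lemma traceNorm_herm {A : Matrix (Fin 2) (Fin 2) ℂ} (hA : A.IsHermitian) :
    traceNorm A = max |A.trace.re| (D A) := by
  rw [traceNorm_herm_eigen hA, abs_add_abs_eq_max, herm_trace_re hA, herm_D hA]

/-- Majorization in terms of the spread, given equal traces. -/
lemma maj2_iff_D {A B : Matrix (Fin 2) (Fin 2) ℂ} (hA : A.IsHermitian) (hB : B.IsHermitian)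
    (htr : B.trace = A.trace) : Maj2 hA hB ↔ D B ≤ D A := by
  have hsum : hB.eigenvalues 0 + hB.eigenvalues 1 = hA.eigenvalues 0 + hA.eigenvalues 1 := by
    rw [← herm_trace_re hA, ← herm_trace_re hB, htr]
  have hDA := herm_D hA
  have hDB := herm_D hB
  constructor
  · rintro ⟨hmax, -⟩
    rw [max_formula, max_formula] at hmax
    rw [hDA, hDB]
    linarith
  · intro hD
    refine ⟨?_, hsum⟩
    rw [max_formula, max_formula]
    rw [hDA, hDB] at hD
    linarith

/-- The key scalar lemma. -/
lemma key_real {a b T : ℝ} (ha : 0 ≤ a)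
    (h : ∀ s : ℝ, max |1 + s * T| (|s| * b) ≤ max |1 + s * T| (|s| * a)) : b ≤ a := by
  by_contra hab
  push_neg at hab
  have hb : 0 < b := lt_of_le_of_lt ha hab
  rcases eq_or_ne T 0 with hT | hT
  · have h2 := h (2 / b)
    rw [hT] at h2
    simp only [mul_zero, add_zero, abs_one] at h2
    have hs : |2 / b| = 2 / b := abs_of_pos (by positivity)
    rw [hs] at h2
    have hbb : 2 / b * b = 2 := by field_simp
    rw [hbb] at h2
    have h1 : max (1 : ℝ) 2 = 2 := max_eq_right (by norm_num)
    rw [h1] at h2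
    have hlt : 2 / b * a < 2 := by
      have : 2 / b * a < 2 / b * b := by
        apply mul_lt_mul_of_pos_left hab (by positivity)
      rwa [hbb] at this
    have : max (1 : ℝ) (2 / b * a) < 2 := max_lt (by norm_num) hlt
    linarith
  · have h2 := h (-1 / T)
    have hz : 1 + (-1 / T) * T = 0 := by field_simp; norm_num
    rw [hz] at h2
    simp only [abs_zero] at h2
    have hs : 0 < |(-1 / T : ℝ)| := by
      rw [abs_pos]
      exact div_ne_zero (by norm_num) hT
    rw [max_eq_right (by positivity), max_eq_right (by positivity)] at h2
    have := le_of_mul_le_mul_left h2 hs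
    linarith

end TNAux

open TNAux in
theorem traceNorm_half_family_iff_majorization
    (ρ₁ ρ₂ τ₁ τ₂ : Matrix (Fin 2) (Fin 2) ℂ)
    (hρ₁ : ρ₁.IsHermitian) (hρ₂ : ρ₂.IsHermitian) (hτ₁ : τ₁.IsHermitian) (hτ₂ : τ₂.IsHermitian)
    (ht₁ : ρ₁.trace = τ₁.trace) (ht₂ : ρ₂.trace = τ₂.trace) :
    (∀ β γ : ℝ,
        traceNorm ((1 / 2 : ℂ) • 1 + (β : ℂ) • τ₁ + (γ : ℂ) • τ₂) ≤
          traceNorm ((1 / 2 : ℂ) • 1 + (β : ℂ) • ρ₁ + (γ : ℂ) • ρ₂)) ↔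
      (∀ (t : ℝ) (hρ : (ρ₁ - (t : ℂ) • ρ₂).IsHermitian) (hτ : (τ₁ - (t : ℂ) • τ₂).IsHermitian),
        Maj2 hρ hτ) := by
  -- Hermiticity of real smul
  have hsmul : ∀ (s : ℝ) (X : Matrix (Fin 2) (Fin 2) ℂ), X.IsHermitian →
      ((s : ℂ) • X).IsHermitian := by
    intro s X hX
    unfold Matrix.IsHermitian
    rw [Matrix.conjTranspose_smul, hX.eq]
    congr 1
    simp [Complex.star_def, Complex.conj_ofReal]
  -- Hermiticity of the family matrices
  have hNherm : ∀ (X Y : Matrix (Fin 2) (Fin 2) ℂ), X.IsHermitian → Y.IsHermitian →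
      ∀ β γ : ℝ, ((1 / 2 : ℂ) • 1 + (β : ℂ) • X + (γ : ℂ) • Y).IsHermitian := by
    intro X Y hX hY β γ
    have h1 : ((1 / 2 : ℂ) • (1 : Matrix (Fin 2) (Fin 2) ℂ)).IsHermitian := by
      have : ((1 / 2 : ℂ) • (1 : Matrix (Fin 2) (Fin 2) ℂ)) = (((1 / 2 : ℝ) : ℂ) • 1) := by
        norm_num
      rw [this]
      exact hsmul _ _ Matrix.isHermitian_one
    exact (h1.add (hsmul β X hX)).add (hsmul γ Y hY)
  -- trace of the family matrices
  have hNtrace : ∀ (X Y : Matrix (Fin 2) (Fin 2) ℂ) (β γ : ℝ),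
      ((1 / 2 : ℂ) • 1 + (β : ℂ) • X + (γ : ℂ) • Y).trace.re
        = 1 + β * X.trace.re + γ * Y.trace.re := by
    intro X Y β γ
    rw [Matrix.trace_add, Matrix.trace_add, Matrix.trace_smul, Matrix.trace_smul,
      Matrix.trace_smul, Matrix.trace_one]
    simp [Complex.add_re, smul_eq_mul, Complex.re_ofReal_mul]
  -- spread of the family matrices
  have hND : ∀ (X Y : Matrix (Fin 2) (Fin 2) ℂ) (β γ : ℝ),
      D ((1 / 2 : ℂ) • 1 + (β : ℂ) • X + (γ : ℂ) • Y) = D ((β : ℂ) • X + (γ : ℂ) • Y) := by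
    intro X Y β γ
    rw [add_assoc, D_shift]
  constructor
  · -- forward direction
    intro h t hρh hτh
    have htrBA : (τ₁ - (t : ℂ) • τ₂).trace = (ρ₁ - (t : ℂ) • ρ₂).trace := by
      rw [Matrix.trace_sub, Matrix.trace_sub, Matrix.trace_smul, Matrix.trace_smul, ht₁, ht₂]
    rw [maj2_iff_D hρh hτh htrBA]
    set T : ℝ := (ρ₁ - (t : ℂ) • ρ₂).trace.re with hT
    have hTτ : (τ₁ - (t : ℂ) • τ₂).trace.re = T := by rw [htrBA]
    -- relate family matrices to scalar multiples
    have hrel : ∀ (X Y : Matrix (Fin 2) (Fin 2) ℂ) (β : ℝ),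
        (β : ℂ) • X + ((-t * β : ℝ) : ℂ) • Y = (β : ℂ) • (X - (t : ℂ) • Y) := by
      intro X Y β
      rw [smul_sub, smul_smul, sub_eq_add_neg, ← neg_smul]
      congr 2
      push_cast
      ring
    have key : ∀ β : ℝ, max |1 + β * T| (|β| * D (τ₁ - (t : ℂ) • τ₂))
        ≤ max |1 + β * T| (|β| * D (ρ₁ - (t : ℂ) • ρ₂)) := by
      intro β
      have h0 := h β (-t * β)
      rw [traceNorm_herm (hNherm τ₁ τ₂ hτ₁ hτ₂ β (-t * β)),
        traceNorm_herm (hNherm ρ₁ ρ₂ hρ₁ hρ₂ β (-t * β))] at h0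
      rw [hNtrace, hNtrace, hND, hND, hrel, hrel, D_smul, D_smul] at h0
      have htr1 : 1 + β * τ₁.trace.re + (-t * β) * τ₂.trace.re = 1 + β * T := by
        have : T = τ₁.trace.re - t * τ₂.trace.re := by
          rw [← hTτ, Matrix.trace_sub, Matrix.trace_smul]
          simp [Complex.sub_re, smul_eq_mul, Complex.re_ofReal_mul]
        rw [this]; ring
      have htr2 : 1 + β * ρ₁.trace.re + (-t * β) * ρ₂.trace.re = 1 + β * T := by
        have : T = ρ₁.trace.re - t * ρ₂.trace.re := by
          rw [hT, Matrix.trace_sub, Matrix.trace_smul]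
          simp [Complex.sub_re, smul_eq_mul, Complex.re_ofReal_mul]
        rw [this]; ring
      rw [htr1, htr2] at h0
      exact h0
    exact key_real (D_nonneg _) key
  · -- backward direction
    intro h β γ
    have hD : ∀ t : ℝ, D (τ₁ - (t : ℂ) • τ₂) ≤ D (ρ₁ - (t : ℂ) • ρ₂) := by
      intro t
      have hρh : (ρ₁ - (t : ℂ) • ρ₂).IsHermitian := hρ₁.sub (hsmul t ρ₂ hρ₂)
      have hτh : (τ₁ - (t : ℂ) • τ₂).IsHermitian := hτ₁.sub (hsmul t τ₂ hτ₂)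
      have htrBA : (τ₁ - (t : ℂ) • τ₂).trace = (ρ₁ - (t : ℂ) • ρ₂).trace := by
        rw [Matrix.trace_sub, Matrix.trace_sub, Matrix.trace_smul, Matrix.trace_smul, ht₁, ht₂]
      exact (maj2_iff_D hρh hτh htrBA).mp (h t hρh hτh)
    -- derive D τ₂ ≤ D ρ₂
    have hD2 : D τ₂ ≤ D ρ₂ := by
      by_contra hc
      push_neg at hc
      set ε : ℝ := D τ₂ - D ρ₂ with hε
      have hεpos : 0 < ε := by simp [hε]; linarith
      set t : ℝ := (D τ₁ + D ρ₁) / ε + 1 with htdef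
      have hnn : 0 ≤ D τ₁ + D ρ₁ := add_nonneg (D_nonneg _) (D_nonneg _)
      have htpos : 0 < t := by
        have : 0 ≤ (D τ₁ + D ρ₁) / ε := div_nonneg hnn hεpos.le
        rw [htdef]
        linarith
      have hkey : t * D τ₂ ≤ D τ₁ + D ρ₁ + t * D ρ₂ := by
        have h1 : D ((t : ℂ) • τ₂) = t * D τ₂ := by
          rw [D_smul, abs_of_pos htpos]
        have h2 : (t : ℂ) • τ₂ = τ₁ - (τ₁ - (t : ℂ) • τ₂) := (sub_sub_cancel τ₁ _).symm
        calc t * D τ₂ = D ((t : ℂ) • τ₂) := h1.symm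
          _ = D (τ₁ - (τ₁ - (t : ℂ) • τ₂)) := by rw [← h2]
          _ ≤ D τ₁ + D (τ₁ - (t : ℂ) • τ₂) := D_sub_le _ _
          _ ≤ D τ₁ + D (ρ₁ - (t : ℂ) • ρ₂) := by linarith [hD t]
          _ ≤ D τ₁ + (D ρ₁ + D ((t : ℂ) • ρ₂)) := by linarith [D_sub_le ρ₁ ((t : ℂ) • ρ₂)]
          _ = D τ₁ + (D ρ₁ + t * D ρ₂) := by rw [D_smul, abs_of_pos htpos]
          _ = D τ₁ + D ρ₁ + t * D ρ₂ := by ring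
      have ht2 : t * ε ≤ D τ₁ + D ρ₁ := by
        have : t * D τ₂ - t * D ρ₂ ≤ D τ₁ + D ρ₁ := by linarith
        calc t * ε = t * D τ₂ - t * D ρ₂ := by rw [hε]; ring
          _ ≤ D τ₁ + D ρ₁ := this
      have ht3 : t * ε = D τ₁ + D ρ₁ + ε := by
        rw [htdef]
        field_simp
      have hDnn : 0 ≤ D τ₁ + D ρ₁ := hnn
      linarith
    -- main estimate on spreads
    have hmain : D ((β : ℂ) • τ₁ + (γ : ℂ) • τ₂) ≤ D ((β : ℂ) • ρ₁ + (γ : ℂ) • ρ₂) := by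
      rcases eq_or_ne β 0 with hβ | hβ
      · subst hβ
        simp only [Complex.ofReal_zero, zero_smul, zero_add]
        rw [D_smul, D_smul]
        exact mul_le_mul_of_nonneg_left hD2 (abs_nonneg _)
      · set t : ℝ := -γ / β with htdef
        have hrw : ∀ X Y : Matrix (Fin 2) (Fin 2) ℂ,
            (β : ℂ) • X + (γ : ℂ) • Y = (β : ℂ) • (X - (t : ℂ) • Y) := by
          intro X Y
          rw [smul_sub, smul_smul]
          have hc : (β : ℂ) * (t : ℂ) = -(γ : ℂ) := by
            rw [htdef]
            push_cast
            field_simp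
          rw [hc, neg_smul, sub_neg_eq_add]
        rw [hrw τ₁ τ₂, hrw ρ₁ ρ₂, D_smul, D_smul]
        exact mul_le_mul_of_nonneg_left (hD t) (abs_nonneg _)
    -- put things together
    rw [traceNorm_herm (hNherm τ₁ τ₂ hτ₁ hτ₂ β γ), traceNorm_herm (hNherm ρ₁ ρ₂ hρ₁ hρ₂ β γ),
      hNtrace, hNtrace, hND, hND, ht₁, ht₂]
    exact max_le_max (le_refl _) hmain
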